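/- Let σ₊, σ₋ have positive real parts. The distribution zₙ ↦ F⁻¹[ξₙ ↦ ξₙ/((σ₊+iξₙ)(σ₋-iξₙ))](zₙ) has one-sided limits at zₙ = 0, and its jump (limit from zₙ → 0⁺ minus limit from zₙ → 0⁻) equals i. -/

import Mathlib

open MeasureTheory Filter Topology Set FourierTransform

lemma re_pos_ne_zero' {c : ℂ} (hc : 0 < c.re) : c ≠ 0 := by
  intro h; rw [h] at hc; simp at hc

lemma aux_integrableOn_cexp (c : ℂ) (hc : 0 < c.re) :
    IntegrableOn (fun z : ℝ => Complex.exp (-(c * z))) (Ioi (0:ℝ)) := by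
  refine (exp_neg_integrableOn_Ioi 0 hc).mono' ?_ ?_
  · exact (Complex.continuous_exp.comp (by continuity)).aestronglyMeasurable
  · filter_upwards with z
    rw [Complex.norm_exp]
    simp [Complex.mul_re]

lemma aux_integral_cexp (c : ℂ) (hc : 0 < c.re) :
    ∫ z in Ioi (0:ℝ), Complex.exp (-(c * z)) = 1 / c := by
  have hc0 : c ≠ 0 := re_pos_ne_zero' hc
  have hd : ∀ x ∈ Ici (0:ℝ), HasDerivAt (fun z : ℝ => -Complex.exp (-(c * z)) / c)
      (Complex.exp (-(c * x))) x := by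
    intro x _
    have h0 : HasDerivAt (fun z : ℝ => -(c * (z:ℂ))) (-c) x := by
      simpa using ((Complex.ofRealCLM.hasDerivAt (x := x)).const_mul (-c))
    have h1 := h0.cexp.div_const (-c)
    rw [show (fun z : ℝ => -Complex.exp (-(c * z)) / c) = fun z : ℝ => Complex.exp (-(c * z)) / -c from
      funext fun z => by rw [neg_div, div_neg]]
    exact h1.congr_deriv (by field_simp)
  have ht : Tendsto (fun x : ℝ => -Complex.exp (-(c * x)) / c) atTop (𝓝 0) := by
    rw [tendsto_zero_iff_norm_tendsto_zero]
    have heq : (fun x : ℝ => ‖-Complex.exp (-(c * x)) / c‖)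
        = fun x => Real.exp (-(c.re * x)) / ‖c‖ := by
      funext x
      rw [norm_div, norm_neg, Complex.norm_exp]
      simp [Complex.mul_re]
    rw [heq]
    have h2 : Tendsto (fun x : ℝ => Real.exp (-(c.re * x))) atTop (𝓝 0) :=
      Real.tendsto_exp_neg_atTop_nhds_zero.comp (Tendsto.const_mul_atTop hc tendsto_id)
    simpa using h2.div_const ‖c‖
  have := integral_Ioi_of_hasDerivAt_of_tendsto' hd (aux_integrableOn_cexp c hc) ht
  rw [this]
  simp [neg_div]

lemma aux_integrableOn_cexp_Iic (c : ℂ) (hc : 0 < c.re) :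
    IntegrableOn (fun z : ℝ => Complex.exp (c * z)) (Iic (0:ℝ)) := by
  have h0 : IntegrableOn ((fun z : ℝ => Complex.exp (c * z)) ∘ (fun x : ℝ => -x))
      ((fun x : ℝ => -x) ⁻¹' (Iic (0:ℝ))) := by
    have hs : ((fun x : ℝ => -x) ⁻¹' (Iic (0:ℝ))) = Ici (0:ℝ) := by ext x; simp
    rw [hs, integrableOn_Ici_iff_integrableOn_Ioi]
    refine (aux_integrableOn_cexp c hc).congr_fun ?_ measurableSet_Ioi
    intro z _; simp [Function.comp]
  exact (MeasurePreserving.integrableOn_comp_preimage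
    (Measure.measurePreserving_neg (volume : Measure ℝ))
    (Homeomorph.neg ℝ).measurableEmbedding).1 h0

lemma aux_integral_cexp_Iic (c : ℂ) (hc : 0 < c.re) :
    ∫ z in Iic (0:ℝ), Complex.exp (c * z) = 1 / c := by
  have h := integral_comp_neg_Iic (0:ℝ) (fun x : ℝ => Complex.exp (-(c * x)))
  rw [neg_zero] at h
  rw [← aux_integral_cexp c hc, ← h]
  refine setIntegral_congr_fun measurableSet_Iic fun z _ => ?_
  push_cast
  ring_nf

set_option maxHeartbeats 1000000 in
/-- The distribution `F⁻¹[ξ ↦ ξ/((σ₊+iξ)(σ₋-iξ))]` (inverse Fourier transform with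
convention `(1/2π)∫ e^{izξ}·dξ`, expressed by pairing with Schwartz functions) is
given by a function having one-sided limits at `0`, whose jump
(limit from the right minus limit from the left) equals `i`. -/
theorem jump_inv_fourier_xi_div (σp σm : ℂ) (hp : 0 < σp.re) (hm : 0 < σm.re) :
    ∃ g : ℝ → ℂ,
      (∀ φ : SchwartzMap ℝ ℂ,
        ∫ ξ : ℝ, ((ξ : ℂ) / ((σp + Complex.I * ξ) * (σm - Complex.I * ξ))) *
            ((1 / (2 * (Real.pi : ℂ))) * ∫ z : ℝ, Complex.exp (Complex.I * ξ * z) * φ z)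
          = ∫ z : ℝ, g z * φ z) ∧
      ∃ Lp Lm : ℂ,
        Tendsto g (𝓝[>] (0 : ℝ)) (𝓝 Lp) ∧
        Tendsto g (𝓝[<] (0 : ℝ)) (𝓝 Lm) ∧
        Lp - Lm = Complex.I := by
  have hS0 : σp + σm ≠ 0 := re_pos_ne_zero' (by simp [Complex.add_re]; positivity)
  set A : ℂ := Complex.I * σp / (σp + σm) with hA
  set B : ℂ := -(Complex.I * σm) / (σp + σm) with hB
  set g : ℝ → ℂ :=
    fun z => if 0 < z then A * Complex.exp (-(σp * z)) else B * Complex.exp (σm * z) with hg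
  -- measurability and integrability of g
  have hgm : Measurable g := by
    refine Measurable.ite measurableSet_Ioi ?_ ?_ <;>
      exact (by fun_prop : Continuous fun z : ℝ => _ * Complex.exp _).measurable
  have hgIoi : IntegrableOn g (Ioi (0:ℝ)) := by
    refine IntegrableOn.congr_fun ((aux_integrableOn_cexp σp hp).const_mul A) ?_ measurableSet_Ioi
    intro z hz; simp [hg, if_pos (mem_Ioi.mp hz)]
  have hgIic : IntegrableOn g (Iic (0:ℝ)) := by
    refine IntegrableOn.congr_fun ((aux_integrableOn_cexp_Iic σm hm).const_mul B) ?_ measurableSet_Iic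
    intro z hz; simp [hg, if_neg (not_lt.mpr (mem_Iic.mp hz))]
  have hgi : Integrable g := by
    rw [← integrableOn_univ, ← Iic_union_Ioi (a := (0:ℝ))]
    exact integrableOn_union.mpr ⟨hgIic, hgIoi⟩
  -- Fourier transform of g
  have hFT : ∀ ξ : ℝ, ∫ z : ℝ, Complex.exp (-(Complex.I * ξ * z)) * g z
      = (ξ : ℂ) / ((σp + Complex.I * ξ) * (σm - Complex.I * ξ)) := by
    intro ξ
    have hp' : 0 < (σp + Complex.I * ξ).re := by
      simpa [Complex.add_re, Complex.mul_re] using hp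
    have hm' : 0 < (σm - Complex.I * ξ).re := by
      simpa [Complex.sub_re, Complex.mul_re] using hm
    have eIoi : ∀ z ∈ Ioi (0:ℝ), Complex.exp (-(Complex.I * ξ * z)) * g z
        = A * Complex.exp (-((σp + Complex.I * ξ) * z)) := by
      intro z hz
      rw [hg]; simp only [if_pos (mem_Ioi.mp hz)]
      rw [show -((σp + Complex.I * ξ) * (z:ℂ)) = -(Complex.I * ξ * z) + -(σp * z) by ring,
        Complex.exp_add]
      ring
    have eIic : ∀ z ∈ Iic (0:ℝ), Complex.exp (-(Complex.I * ξ * z)) * g z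
        = B * Complex.exp ((σm - Complex.I * ξ) * z) := by
      intro z hz
      rw [hg]; simp only [if_neg (not_lt.mpr (mem_Iic.mp hz))]
      rw [show ((σm - Complex.I * ξ) * (z:ℂ)) = -(Complex.I * ξ * z) + σm * z by ring,
        Complex.exp_add]
      ring
    have hiIoi : IntegrableOn (fun z : ℝ => Complex.exp (-(Complex.I * ξ * z)) * g z)
        (Ioi (0:ℝ)) := by
      refine IntegrableOn.congr_fun ((aux_integrableOn_cexp _ hp').const_mul A) ?_ measurableSet_Ioi
      intro z hz; exact (eIoi z hz).symm
    have hiIic : IntegrableOn (fun z : ℝ => Complex.exp (-(Complex.I * ξ * z)) * g z)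
        (Iic (0:ℝ)) := by
      refine IntegrableOn.congr_fun ((aux_integrableOn_cexp_Iic _ hm').const_mul B) ?_ measurableSet_Iic
      intro z hz; exact (eIic z hz).symm
    rw [← intervalIntegral.integral_Iic_add_Ioi hiIic hiIoi,
      setIntegral_congr_fun measurableSet_Ioi eIoi,
      setIntegral_congr_fun measurableSet_Iic eIic,
      integral_const_mul, integral_const_mul,
      aux_integral_cexp _ hp', aux_integral_cexp_Iic _ hm']
    rw [hA, hB]
    have h1 : σp + Complex.I * ξ ≠ 0 := re_pos_ne_zero' hp'
    have h2 : σm - Complex.I * ξ ≠ 0 := re_pos_ne_zero' hm'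
    have hI : Complex.I ^ 2 = -1 := Complex.I_sq
    field_simp
    ring_nf
    rw [hI]
    ring
  refine ⟨g, ?_, A, B, ?_, ?_, ?_⟩
  · -- main identity
    intro φ
    set ψ := SchwartzMap.fourierTransformCLM ℂ φ with hψdef
    have hψ : ⇑ψ = 𝓕 ⇑φ := by rw [hψdef]; rfl
    have hπc : ((Real.pi : ℝ) : ℂ) ≠ 0 := by exact_mod_cast Real.pi_ne_zero
    set w : ℝ → ℂ := fun ξ => (1 / (2 * (Real.pi : ℂ))) * ψ (-ξ / (2 * Real.pi)) with hw
    have key1 : ∀ ξ : ℝ,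
        (1 / (2 * (Real.pi : ℂ))) * (∫ z : ℝ, Complex.exp (Complex.I * ξ * z) * φ z) = w ξ := by
      intro ξ
      rw [hw]
      congr 1
      rw [hψ, Real.fourier_eq']
      refine integral_congr_ae (Filter.Eventually.of_forall fun z => ?_)
      beta_reduce
      rw [smul_eq_mul]
      congr 2
      have hin : (inner ℝ z (-ξ / (2 * Real.pi)) : ℝ) = z * (-ξ / (2 * Real.pi)) := by
        simp [RCLike.inner_apply]; ring
      rw [hin]
      push_cast
      field_simp
    have hw_cont : Continuous w := by
      rw [hw]
      exact continuous_const.mul (ψ.continuous.comp (by continuity))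
    have hw_int : Integrable w := by
      have h2 : Integrable (fun ξ : ℝ => ψ ((-(2 * Real.pi))⁻¹ * ξ)) :=
        ψ.integrable.comp_mul_left' (by norm_num [Real.pi_ne_zero])
      have h3 : w = fun ξ : ℝ => (1 / (2 * (Real.pi : ℂ))) * ψ ((-(2 * Real.pi))⁻¹ * ξ) := by
        funext ξ
        have harg : -ξ / (2 * Real.pi) = (-(2 * Real.pi))⁻¹ * ξ := by
          field_simp
        simp only [hw]
        rw [harg]
      rw [h3]
      exact h2.const_mul _
    have key2 : ∀ z : ℝ, ∫ ξ : ℝ, Complex.exp (-(Complex.I * ξ * z)) * w ξ = φ z := by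
      intro z
      have hinv : 𝓕⁻ (𝓕 ⇑φ) z = φ z :=
        MeasureTheory.Integrable.fourierInv_fourier_eq φ.integrable
          (by rw [← hψ]; exact ψ.integrable) φ.continuous.continuousAt
      set G : ℝ → ℂ := fun ξ => Complex.exp (-(Complex.I * ξ * z)) * w ξ with hG
      have hcomp := MeasureTheory.Measure.integral_comp_mul_left G (-(2 * Real.pi))
      have habs : |(-(2 * Real.pi))⁻¹| = (2 * Real.pi)⁻¹ := by
        rw [abs_inv, abs_neg, abs_of_pos (by positivity)]
      have hGx : (fun x : ℝ => G (-(2 * Real.pi) * x))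
          = fun x : ℝ => (1 / (2 * (Real.pi : ℂ))) *
              (Complex.exp (((2 * Real.pi * (x * z) : ℝ) : ℂ) * Complex.I) * ψ x) := by
        funext x
        have hx : (-(-(2 * Real.pi) * x) / (2 * Real.pi) : ℝ) = x := by field_simp
        have harg : -(Complex.I * ((-(2 * Real.pi) * x : ℝ) : ℂ) * z)
            = ((2 * Real.pi * (x * z) : ℝ) : ℂ) * Complex.I := by push_cast; ring
        rw [hG, hw]
        simp only [hx, harg]
        ring
      have hFinv : 𝓕⁻ (𝓕 ⇑φ) z
          = ∫ x : ℝ, Complex.exp (((2 * Real.pi * (x * z) : ℝ) : ℂ) * Complex.I) * ψ x := by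
        rw [Real.fourierInv_eq']
        refine integral_congr_ae (Filter.Eventually.of_forall fun x => ?_)
        beta_reduce
        rw [smul_eq_mul, ← hψ]
        have hin : (inner ℝ x z : ℝ) = x * z := by simp [RCLike.inner_apply]; ring
        rw [hin]
      have e1 : ∫ ξ : ℝ, G ξ = (2 * Real.pi) • ∫ x : ℝ, G (-(2 * Real.pi) * x) := by
        rw [hcomp, habs, smul_smul, mul_inv_cancel₀ (by positivity), one_smul]
      have e2 : ∫ x : ℝ, G (-(2 * Real.pi) * x)
          = (1 / (2 * (Real.pi : ℂ))) *
              ∫ x : ℝ, Complex.exp (((2 * Real.pi * (x * z) : ℝ) : ℂ) * Complex.I) * ψ x := by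
        rw [hGx, integral_const_mul]
      show ∫ ξ : ℝ, G ξ = φ z
      rw [e1, e2, ← hFinv, hinv, Complex.real_smul]
      push_cast
      field_simp
    -- Fubini
    have hFub : Integrable
        (Function.uncurry fun ξ z : ℝ => Complex.exp (-(Complex.I * ξ * z)) * g z * w ξ)
        (volume.prod volume) := by
      have c1 : Continuous fun p : ℝ × ℝ => Complex.exp (-(Complex.I * p.1 * p.2)) := by
        fun_prop
      refine Integrable.mono' (hw_int.norm.mul_prod hgi.norm)
        (((c1.aestronglyMeasurable).mul
          ((hgm.comp measurable_snd).aestronglyMeasurable)).mul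
          ((hw_cont.comp continuous_fst).aestronglyMeasurable))
        (Filter.Eventually.of_forall fun p => ?_)
      have h1 : ‖Complex.exp (-(Complex.I * (p.1 : ℂ) * p.2))‖ = 1 := by
        rw [Complex.norm_exp]
        simp [Complex.mul_re]
      calc ‖Complex.exp (-(Complex.I * (p.1 : ℂ) * p.2)) * g p.2 * w p.1‖
          = ‖Complex.exp (-(Complex.I * (p.1 : ℂ) * p.2))‖ * ‖g p.2‖ * ‖w p.1‖ := by
            rw [norm_mul, norm_mul]
        _ = ‖w p.1‖ * ‖g p.2‖ := by rw [h1]; ring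
        _ ≤ ‖w p.1‖ * ‖g p.2‖ := le_rfl
    calc ∫ ξ : ℝ, ((ξ : ℂ) / ((σp + Complex.I * ξ) * (σm - Complex.I * ξ))) *
            ((1 / (2 * (Real.pi : ℂ))) * ∫ z : ℝ, Complex.exp (Complex.I * ξ * z) * φ z)
        = ∫ ξ : ℝ, ∫ z : ℝ, Complex.exp (-(Complex.I * ξ * z)) * g z * w ξ := by
          refine integral_congr_ae (Filter.Eventually.of_forall fun ξ => ?_)
          beta_reduce
          rw [key1 ξ, ← hFT ξ, ← integral_mul_const]
      _ = ∫ z : ℝ, ∫ ξ : ℝ, Complex.exp (-(Complex.I * ξ * z)) * g z * w ξ :=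
          integral_integral_swap hFub
      _ = ∫ z : ℝ, g z * φ z := by
          refine integral_congr_ae (Filter.Eventually.of_forall fun z => ?_)
          beta_reduce
          rw [show (fun ξ : ℝ => Complex.exp (-(Complex.I * ξ * z)) * g z * w ξ)
              = fun ξ : ℝ => g z * (Complex.exp (-(Complex.I * ξ * z)) * w ξ) from
              funext fun ξ => by ring,
            integral_const_mul, key2 z]
  · have h1 : Continuous fun z : ℝ => A * Complex.exp (-(σp * z)) := by fun_prop
    have h2 := (h1.tendsto 0).mono_left (nhdsWithin_le_nhds (s := Ioi (0:ℝ)))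
    simp only [Complex.ofReal_zero, mul_zero, neg_zero, Complex.exp_zero, mul_one] at h2
    refine h2.congr' ?_
    filter_upwards [self_mem_nhdsWithin] with z hz
    simp [hg, if_pos (mem_Ioi.mp hz)]
  · have h1 : Continuous fun z : ℝ => B * Complex.exp (σm * z) := by fun_prop
    have h2 := (h1.tendsto 0).mono_left (nhdsWithin_le_nhds (s := Iio (0:ℝ)))
    simp only [Complex.ofReal_zero, mul_zero, Complex.exp_zero, mul_one] at h2
    refine h2.congr' ?_
    filter_upwards [self_mem_nhdsWithin] with z hz
    simp [hg, if_neg (not_lt.mpr (le_of_lt (mem_Iio.mp hz)))]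
  · rw [hA, hB]
    field_simp
    ring
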